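/- With the lifting map m defined from the ordering of P by edge-squared distance to the source s, for all indices i, j one has ‖m(p_j) − m(p_i)‖ = √(|d₂(s,p_j) − d₂(s,p_i)|). -/

import Mathlib

open scoped BigOperators
open MeasureTheory

noncomputable section

/-- Points of `ℝ^d`. -/
abbrev Pt (d : ℕ) : Type := EuclideanSpace ℝ (Fin d)

/-- The edge-squared metric on a point set `P ⊆ ℝ^d`: the infimum over finite chains of points
of `P` from `a` to `b` of the sum of squared Euclidean lengths of the steps. -/
noncomputable def edgeSq {d : ℕ} (P : Set (Pt d)) (a b : Pt d) : ℝ :=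
  sInf {c : ℝ | ∃ (k : ℕ) (p : Fin (k + 1) → Pt d), p 0 = a ∧ p (Fin.last k) = b ∧
    (∀ i, p i ∈ P) ∧ c = ∑ i : Fin k, ‖p i.succ - p i.castSucc‖ ^ 2}

/-!
The `k`-th step of the lifting map runs along the fresh axis `e_k`, on which every earlier point
`m(p_i)`, `i < k`, vanishes. So each step is orthogonal to everything before it, and by
Pythagoras `‖m(p_j) - m(p_i)‖²` is the sum of the squared step lengths from `i` to `j`. Since
`d₂(s, ·)` is nondecreasing along the enumeration, the radicands are nonnegative, each squared
step length is the increment of `d₂(s, ·)`, and the sum telescopes to `d₂(s,p_j) - d₂(s,p_i)`.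
-/

structure IsLiftMap {n : ℕ} (e : Fin (n + 1) → ℝ)
    (m : Fin (n + 1) → EuclideanSpace ℝ (Fin (n + 1))) : Prop where
  zero : m 0 = 0
  succ : ∀ i : Fin n, m i.succ = m i.castSucc +
    √(e i.succ - e i.castSucc) • EuclideanSpace.single i.succ (1 : ℝ)

namespace IsLiftMap

variable {n : ℕ} {e : Fin (n + 1) → ℝ} {m : Fin (n + 1) → EuclideanSpace ℝ (Fin (n + 1))}

theorem apply_eq_zero_of_lt (hm : IsLiftMap e m) {l c : Fin (n + 1)} (hlc : l < c) :
    m l c = 0 := by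
  induction l using Fin.induction generalizing c with
  | zero => simp [hm.zero]
  | succ k ih =>
    have hprev : m k.castSucc c = 0 := ih (Fin.castSucc_lt_succ.trans hlc)
    simp [hm.succ k, hprev, hlc.ne']

theorem norm_succ_sub_sq (hm : IsLiftMap e m) (he : Monotone e) {i : Fin (n + 1)} {k : Fin n}
    (hik : i ≤ k.castSucc) :
    ‖m k.succ - m i‖ ^ 2 = ‖m k.castSucc - m i‖ ^ 2 + (e k.succ - e k.castSucc) := by
  have hstep : 0 ≤ e k.succ - e k.castSucc := sub_nonneg.mpr (he Fin.castSucc_lt_succ.le)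
  have horth : inner ℝ (m k.castSucc - m i)
      (√(e k.succ - e k.castSucc) • EuclideanSpace.single k.succ (1 : ℝ)) = 0 := by
    rw [real_inner_smul_right, EuclideanSpace.inner_single_right, PiLp.sub_apply,
      hm.apply_eq_zero_of_lt Fin.castSucc_lt_succ,
      hm.apply_eq_zero_of_lt (hik.trans_lt Fin.castSucc_lt_succ)]
    simp
  rw [hm.succ k, add_sub_right_comm, norm_add_sq_real, horth, norm_smul, PiLp.norm_single,
    Real.norm_of_nonneg (Real.sqrt_nonneg _)]
  simp [Real.sq_sqrt hstep]

theorem norm_sub_sq (hm : IsLiftMap e m) (he : Monotone e) {i j : Fin (n + 1)} (hij : i ≤ j) :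
    ‖m j - m i‖ ^ 2 = e j - e i := by
  induction j using Fin.induction generalizing i with
  | zero => simp [Fin.le_zero_iff.mp hij]
  | succ k ih =>
    rcases hij.eq_or_lt with rfl | hlt
    · simp
    · have hik : i ≤ k.castSucc := Fin.le_castSucc_iff.mpr hlt
      rw [hm.norm_succ_sub_sq he hik, ih hik]
      ring

theorem norm_sub (hm : IsLiftMap e m) (he : Monotone e) (i j : Fin (n + 1)) :
    ‖m j - m i‖ = √|e j - e i| := by
  wlog hij : i ≤ j generalizing i j
  · rw [norm_sub_rev, abs_sub_comm, this j i (le_of_not_ge hij)]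
  rw [abs_of_nonneg (sub_nonneg.mpr (he hij)), ← hm.norm_sub_sq he hij,
    Real.sqrt_sq (norm_nonneg _)]

end IsLiftMap

theorem liftMap_dist (d n : ℕ) (P : Set (Pt d)) (p : Fin (n + 1) → Pt d)
    (hmono : ∀ i j : Fin (n + 1), i ≤ j → edgeSq P (p 0) (p i) ≤ edgeSq P (p 0) (p j))
    (m : Fin (n + 1) → EuclideanSpace ℝ (Fin (n + 1)))
    (hm0 : m 0 = 0)
    (hrec : ∀ i : Fin n, m i.succ = m i.castSucc +
      Real.sqrt (edgeSq P (p 0) (p i.succ) - edgeSq P (p 0) (p i.castSucc)) •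
        EuclideanSpace.single i.succ (1 : ℝ)) :
    ∀ i j : Fin (n + 1),
      ‖m j - m i‖ = Real.sqrt |edgeSq P (p 0) (p j) - edgeSq P (p 0) (p i)| :=
  IsLiftMap.norm_sub (e := fun k => edgeSq P (p 0) (p k)) ⟨hm0, hrec⟩ fun _ _ => hmono _ _
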